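/- arXiv:2605.03786 — 3 statements merged into one kernel-verified Lean document; each statement's English description precedes it below -/
import Mathlib

section
/- Let D be a finite digraph without loops (modeled as an irreflexive relation D on a finite vertex set V). Then there exists a spanning subdigraph D' of D (a relation D' with D' x y → D x y for all x, y ∈ V) such that D' is acyclic (there is no vertex v with a nonempty directed walk in D' from v back to v, i.e. no v satisfies the transitive closure relation D'⁺ v v) and such that for every vertex v ∈ V, the out-degree of v in D' plus the in-degree of v in D' is at least the out-degree of v in D; here the out-degree of v in a relation R is the number of vertices u with R v u, and the in-degree is the number of vertices u with R u v. -/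
open Finset

/-- The out-degree of a vertex `v` in a relation `R` on a finite type is the number of
vertices `u` with `R v u`; the in-degree is the number of `u` with `R u v`.
We use `Nat.card` of the corresponding subtypes. -/
theorem acyclic_spanning_subdigraph {V : Type*} [Fintype V]
    (D : V → V → Prop) (hD : ∀ v, ¬ D v v) :
    ∃ D' : V → V → Prop,
      (∀ x y, D' x y → D x y) ∧
      (∀ v, ¬ Relation.TransGen D' v v) ∧
      (∀ v : V, Nat.card {u : V // D v u} ≤
        Nat.card {u : V // D' v u} + Nat.card {u : V // D' u v}) := by
  classical
  rcases isEmpty_or_nonempty V with hV | hV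
  · exact ⟨D, fun x y h => h, fun v => (IsEmpty.false v).elim,
      fun v => (IsEmpty.false v).elim⟩
  obtain ⟨m, hm⟩ : ∃ m, Fintype.card V = m + 1 :=
    ⟨Fintype.card V - 1, (Nat.succ_pred_eq_of_pos Fintype.card_pos).symm⟩
  have e0 : V ≃ Fin (m + 1) := (Fintype.equivFin V).trans (finCongr hm)
  haveI : Nonempty (V ≃ Fin (m + 1)) := ⟨e0⟩
  set F : (V ≃ Fin (m + 1)) → ℕ :=
    fun g => ∑ x : V, (univ.filter fun y => D x y ∧ g x < g y).card with hF
  obtain ⟨g, hgmax⟩ := Finite.exists_max F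
  refine ⟨fun x y => D x y ∧ g x < g y, fun x y h => h.1, ?_, ?_⟩
  · intro v hv
    have key : ∀ a b : V, Relation.TransGen (fun x y => D x y ∧ g x < g y) a b →
        g a < g b := by
      intro a b h
      induction h with
      | single h => exact h.2
      | tail _ h ih => exact ih.trans h.2
    exact absurd (key v v hv) (lt_irrefl _)
  · intro v
    set g' : V ≃ Fin (m + 1) := g.trans (Fin.cycleRange (g v)) with hg'
    have hg'app : ∀ u : V, g' u = Fin.cycleRange (g v) (g u) := fun u => rfl
    have hg'v : g' v = 0 := by rw [hg'app]; exact Fin.cycleRange_self (g v)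
    have hg'ne : ∀ u, u ≠ v → g' u ≠ 0 := fun u hu h =>
      hu (g'.injective (h.trans hg'v.symm))
    have hval : ∀ j : Fin (m + 1), j ≠ g v →
        ((Fin.cycleRange (g v)) j).val = if j < g v then j.val + 1 else j.val := by
      intro j hj
      rcases lt_or_gt_of_ne hj with h | h
      · rw [Fin.cycleRange_of_lt h, if_pos h,
          Fin.val_add_one_of_lt (lt_of_lt_of_le h (Fin.le_last _))]
      · rw [Fin.cycleRange_of_gt h, if_neg (not_lt.2 h.le)]
    have hord : ∀ x y : V, x ≠ v → y ≠ v → (g' x < g' y ↔ g x < g y) := by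
      intro x y hx hy
      have hxv : g x ≠ g v := fun h => hx (g.injective h)
      have hyv : g y ≠ g v := fun h => hy (g.injective h)
      have hxv' : (g x).val ≠ (g v).val := fun h => hxv (Fin.val_injective h)
      have hyv' : (g y).val ≠ (g v).val := fun h => hyv (Fin.val_injective h)
      have h1 := hval (g x) hxv
      have h2 := hval (g y) hyv
      rw [hg'app, hg'app, Fin.lt_def, Fin.lt_def, h1, h2]
      split_ifs with hA hB hB <;>
        simp only [Fin.lt_def, not_lt] at hA hB <;> omega
    -- the filter at v for g' counts all out-neighbours of v
    have hAv : (univ.filter fun y => D v y ∧ g' v < g' y)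
        = univ.filter fun y => D v y := by
      ext y
      simp only [mem_filter, mem_univ, true_and, and_iff_left_iff_imp]
      intro hDy
      have hy : y ≠ v := fun h => hD v (h ▸ hDy)
      rw [hg'v]
      exact (Fin.pos_iff_ne_zero' _).2 (hg'ne y hy)
    -- the filter at x ≠ v for g' is the filter for g minus v
    have hBx : ∀ x, x ≠ v → (univ.filter fun y => D x y ∧ g' x < g' y)
        = (univ.filter fun y => D x y ∧ g x < g y).erase v := by
      intro x hx
      ext y
      simp only [mem_erase, mem_filter, mem_univ, true_and]
      by_cases hy : y = v
      · subst hy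
        simp only [ne_eq, not_true_eq_false, false_and, iff_false, not_and]
        intro _ hlt
        rw [hg'v] at hlt
        exact absurd hlt (Fin.not_lt_zero _)
      · constructor
        · rintro ⟨h1, h2⟩; exact ⟨hy, h1, (hord x y hx hy).1 h2⟩
        · rintro ⟨-, h1, h2⟩; exact ⟨h1, (hord x y hx hy).2 h2⟩
    have hcard : ∀ x, x ≠ v →
        (univ.filter fun y => D x y ∧ g x < g y).card
          = (univ.filter fun y => D x y ∧ g' x < g' y).card
            + (if D x v ∧ g x < g v then 1 else 0) := by
      intro x hx
      rw [hBx x hx]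
      by_cases hv : D x v ∧ g x < g v
      · have hmem : v ∈ univ.filter fun y => D x y ∧ g x < g y := by
          simp [hv]
        have hpos : 0 < (univ.filter fun y => D x y ∧ g x < g y).card :=
          card_pos.2 ⟨v, hmem⟩
        rw [if_pos hv, card_erase_of_mem hmem]
        omega
      · rw [if_neg hv, erase_eq_of_notMem (by simp [hv]), add_zero]
    -- sum bookkeeping
    have hδv : (if D v v ∧ g v < g v then 1 else 0) = 0 :=
      if_neg (fun h => hD v h.1)
    have hb : (univ.filter fun u => D u v ∧ g u < g v).card
        = ∑ x ∈ univ.erase v, (if D x v ∧ g x < g v then 1 else 0) := by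
      rw [card_filter]
      rw [← Finset.sum_erase_add _ _ (mem_univ v), hδv, add_zero]
    have hFg : F g = (univ.filter fun y => D v y ∧ g v < g y).card
        + (∑ x ∈ univ.erase v, (univ.filter fun y => D x y ∧ g' x < g' y).card)
        + (univ.filter fun u => D u v ∧ g u < g v).card := by
      simp only [hF]
      rw [← Finset.sum_erase_add _ _ (mem_univ v)]
      rw [Finset.sum_congr rfl (fun x hx => hcard x (mem_erase.1 hx).1)]
      rw [Finset.sum_add_distrib, hb]
      ring
    have hFg' : F g' = (univ.filter fun y => D v y).card
        + (∑ x ∈ univ.erase v, (univ.filter fun y => D x y ∧ g' x < g' y).card) := by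
      simp only [hF]
      rw [← Finset.sum_erase_add _ _ (mem_univ v), hAv]
      ring
    have hle : F g' ≤ F g := hgmax g'
    have hkey : (univ.filter fun y => D v y).card
        ≤ (univ.filter fun y => D v y ∧ g v < g y).card
          + (univ.filter fun u => D u v ∧ g u < g v).card := by omega
    have hncard : ∀ (p : V → Prop), Nat.card {u // p u} = (univ.filter p).card := by
      intro p
      rw [Nat.card_eq_fintype_card, Fintype.card_subtype]
    rw [hncard, hncard, hncard]
    convert hkey using 3 <;> exact Finset.filter_congr_decidable ..
end

section
/- Let G be a 4-regular simple graph on n ≥ 4 vertices whose edge set is partitioned into a family 𝒯 of triangles (3-cycles), and let C be a Hamilton cycle of G. Let τ_2 be the number of triangles of 𝒯 containing exactly two edges of C. Then 3·τ_2 ≥ n. -/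
/-- `T` is (the edge set of) a triangle of `G`: three pairwise distinct, pairwise adjacent
vertices, with `T` consisting of the three edges between them. -/
def IsTriangleEdgeSet {V : Type*} [DecidableEq V] (G : SimpleGraph V)
    (T : Finset (Sym2 V)) : Prop :=
  ∃ a b c : V, a ≠ b ∧ a ≠ c ∧ b ≠ c ∧ G.Adj a b ∧ G.Adj b c ∧ G.Adj a c ∧
    T = {s(a, b), s(b, c), s(a, c)}

/-- The edge set of `G` is partitioned into the family `𝒯` of triangles: every member of
`𝒯` is a triangle of `G`, and every edge of `G` lies in exactly one member of `𝒯`. -/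
def IsTrianglePartition {V : Type*} [Fintype V] [DecidableEq V] (G : SimpleGraph V)
    [DecidableRel G.Adj] (𝒯 : Finset (Finset (Sym2 V))) : Prop :=
  (∀ T ∈ 𝒯, IsTriangleEdgeSet G T) ∧
  (∀ e ∈ G.edgeFinset, ∃! T, T ∈ 𝒯 ∧ e ∈ T)

/-!
Every vertex has two cycle edges, and a Hamilton cycle on `n ≥ 4` vertices contains no triangle,
so each triangle of `𝒯` carries at most two cycle edges and `n = τ₁ + 2 τ₂`. It remains to show
`τ₁ ≤ τ₂`. A 1-triangle has an apex `m`, a vertex whose two edges in the triangle are both off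
the cycle. Since `m` has degree `4`, its two cycle edges go to its other two neighbours, and they
lie in a common triangle, the other triangle through `m`; this is a 2-triangle whose two cycle
edges meet at `m`. The 2-triangle determines `m` as the common vertex of its cycle edges, and `m`
determines the 1-triangle, so this assignment of 2-triangles to 1-triangles is injective.
-/

open SimpleGraph Finset

lemma sum_eq_card_filter_eq_one_add_two_mul {ι : Type*} (s : Finset ι) (f : ι → ℕ)
    (hf : ∀ i ∈ s, f i ≤ 2) :
    ∑ i ∈ s, f i = #{i ∈ s | f i = 1} + 2 * #{i ∈ s | f i = 2} := by
  rw [card_eq_sum_ones, card_eq_sum_ones, sum_filter, sum_filter, mul_sum, ← sum_add_distrib]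
  refine sum_congr rfl fun i hi => ?_
  have := hf i hi
  interval_cases f i <;> rfl

namespace SimpleGraph
variable {V : Type*} [Fintype V] [DecidableEq V] {H : SimpleGraph V} [DecidableRel H.Adj]
  {T : Finset (Sym2 V)} {m m' : V}

lemma neighborFinset_eq_pair {v x y : V} (hv : H.degree v = 2) (hx : H.Adj v x) (hy : H.Adj v y)
    (hxy : x ≠ y) : H.neighborFinset v = {x, y} :=
  (eq_of_subset_of_card_le (by simp [insert_subset_iff, hx, hy])
    (by rw [card_pair hxy, card_neighborFinset_eq_degree, hv])).symm

lemma Connected.cliqueFree_three (hc : H.Connected) (hH : ∀ v, H.degree v = 2)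
    (hn : 4 ≤ Fintype.card V) : H.CliqueFree 3 := by
  intro S hS
  obtain ⟨a, b, c, hab, hac, hbc, rfl⟩ := is3Clique_iff.mp hS
  have hclosed : ∀ x ∈ ({a, b, c} : Finset V), H.neighborFinset x ⊆ {a, b, c} := by
    simp only [mem_insert, mem_singleton, forall_eq_or_imp, forall_eq]
    rw [neighborFinset_eq_pair (hH a) hab hac hbc.ne,
      neighborFinset_eq_pair (hH b) hab.symm hbc hac.ne,
      neighborFinset_eq_pair (hH c) hac.symm hbc.symm hab.ne]
    simp [insert_subset_iff]
  obtain ⟨d, -, hd⟩ := exists_mem_notMem_of_card_lt_card (s := {a, b, c}) (t := univ)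
    (by grind [card_univ, card_le_three])
  obtain ⟨p⟩ := hc.preconnected a d
  obtain ⟨e, -, he, he'⟩ := p.exists_boundary_dart {a, b, c} (by simp) (by simpa using hd)
  exact he' (by simpa using hclosed _ (by simpa using he) ((mem_neighborFinset _ _ _).mpr e.adj))

lemma mem_of_forall_adj_mem (hH : H.degree m = 2) (hT : #(T ∩ H.edgeFinset) = 2)
    (hm : ∀ w, H.Adj m w → s(m, w) ∈ T) : ∀ e ∈ T ∩ H.edgeFinset, m ∈ e := by
  obtain ⟨x, y, hxy, hN⟩ := card_eq_two.mp hH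
  have hx : H.Adj m x := by simp [← mem_neighborFinset, hN]
  have hy : H.Adj m y := by simp [← mem_neighborFinset, hN]
  have hsub : {s(m, x), s(m, y)} ⊆ T ∩ H.edgeFinset := by
    simp [insert_subset_iff, hm x hx, hm y hy, hx, hy]
  have hcard : #(T ∩ H.edgeFinset) ≤ #{s(m, x), s(m, y)} := by
    rw [hT, card_pair (fun h => hxy (Sym2.congr_right.mp h))]
  intro e he
  rw [← eq_of_subset_of_card_le hsub hcard] at he
  simp only [mem_insert, mem_singleton] at he
  rcases he with rfl | rfl <;> exact Sym2.mem_mk_left _ _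

lemma eq_of_forall_adj_mem (hH : ∀ v, H.degree v = 2) (hT : #(T ∩ H.edgeFinset) = 2)
    (hm : ∀ w, H.Adj m w → s(m, w) ∈ T) (hm' : ∀ w, H.Adj m' w → s(m', w) ∈ T) : m = m' := by
  by_contra hne
  have hall : ∀ e ∈ T ∩ H.edgeFinset, e = s(m, m') := fun e he =>
    (Sym2.mem_and_mem_iff hne).mp
      ⟨mem_of_forall_adj_mem (hH m) hT hm e he, mem_of_forall_adj_mem (hH m') hT hm' e he⟩
  have : #(T ∩ H.edgeFinset) ≤ 1 :=
    card_le_one.mpr fun e he f hf => (hall e he).trans (hall f hf).symm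
  omega

end SimpleGraph

namespace SimpleGraph.Walk
variable {V : Type*} [DecidableEq V] {G : SimpleGraph V}

lemma edgeFinset_spanningCoe_toSubgraph {u v : V} (p : G.Walk u v)
    [Fintype p.toSubgraph.spanningCoe.edgeSet] :
    p.toSubgraph.spanningCoe.edgeFinset = p.edges.toFinset := by
  ext e
  simp [Subgraph.edgeSet_spanningCoe]

namespace IsHamiltonianCycle
variable {u : V} {C : G.Walk u u}

lemma card_edges_toFinset [Fintype V] (hC : C.IsHamiltonianCycle) :
    #C.edges.toFinset = Fintype.card V := by
  rw [List.toFinset_card_of_nodup hC.isCycle.edges_nodup, length_edges, hC.length_eq]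

lemma degree_spanningCoe_toSubgraph [Fintype V] (hC : C.IsHamiltonianCycle) (v : V)
    [Fintype (C.toSubgraph.spanningCoe.neighborSet v)] :
    C.toSubgraph.spanningCoe.degree v = 2 := by
  classical
  rw [Subgraph.degree_spanningCoe, Subgraph.degree, ← Nat.card_eq_fintype_card,
    Nat.card_coe_set_eq]
  exact hC.isCycle.ncard_neighborSet_toSubgraph_eq_two (hC.mem_support v)

lemma connected_spanningCoe_toSubgraph (hC : C.IsHamiltonianCycle) :
    C.toSubgraph.spanningCoe.Connected := by
  refine connected_iff_exists_forall_reachable _ |>.mpr ⟨u, fun v => ⟨?_⟩⟩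
  refine (C.takeUntil v (hC.mem_support v)).transfer _ fun e he => ?_
  simpa [Subgraph.edgeSet_spanningCoe] using C.edges_takeUntil_subset_edges _ he

end IsHamiltonianCycle

end SimpleGraph.Walk

def IsApex {V : Type*} (H : SimpleGraph V) (T : Finset (Sym2 V)) (m : V) : Prop :=
  (∃ x, s(m, x) ∈ T) ∧ ∀ x, s(m, x) ∈ T → ¬H.Adj m x

namespace IsTriangleEdgeSet
variable {V : Type*} [DecidableEq V] {G : SimpleGraph V} {T : Finset (Sym2 V)} {m a b x : V}

lemma eq_or_eq_of_mem (hT : IsTriangleEdgeSet G T) (hab : a ≠ b) (ha : s(m, a) ∈ T)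
    (hb : s(m, b) ∈ T) (hx : s(m, x) ∈ T) : x = a ∨ x = b := by
  obtain ⟨p, q, r, hpq, hpr, hqr, -, -, -, rfl⟩ := hT
  simp only [mem_insert, mem_singleton, Sym2.eq_iff] at ha hb hx
  grind

lemma exists_ne_mem (hT : IsTriangleEdgeSet G T) (hx : s(m, x) ∈ T) :
    ∃ w, w ≠ x ∧ s(m, w) ∈ T := by
  obtain ⟨p, q, r, hpq, hpr, hqr, -, -, -, rfl⟩ := hT
  simp only [mem_insert, mem_singleton, Sym2.eq_iff] at hx ⊢
  rcases hx with (⟨rfl, rfl⟩ | ⟨rfl, rfl⟩) | (⟨rfl, rfl⟩ | ⟨rfl, rfl⟩) | (⟨rfl, rfl⟩ | ⟨rfl, rfl⟩)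
  exacts [⟨r, by grind⟩, ⟨r, by grind⟩, ⟨p, by grind⟩, ⟨p, by grind⟩, ⟨q, by grind⟩, ⟨q, by grind⟩]

variable [Fintype V] {H : SimpleGraph V} [DecidableRel H.Adj]

lemma card_inter_edgeFinset_le_two (hT : IsTriangleEdgeSet G T) (hH : H.CliqueFree 3) :
    #(T ∩ H.edgeFinset) ≤ 2 := by
  obtain ⟨a, b, c, hab, hac, hbc, -, -, -, rfl⟩ := hT
  by_contra! h
  have hsub : {s(a, b), s(b, c), s(a, c)} ⊆ H.edgeFinset :=
    inter_eq_left.mp (eq_of_subset_of_card_le inter_subset_left (by grind [card_le_three]))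
  simp only [insert_subset_iff, singleton_subset_iff, mem_edgeFinset, mem_edgeSet] at hsub
  exact hH {a, b, c} (is3Clique_triple_iff.mpr ⟨hsub.1, hsub.2.2, hsub.2.1⟩)

lemma exists_isApex (hT : IsTriangleEdgeSet G T) (h : #(T ∩ H.edgeFinset) ≤ 1) :
    ∃ m, IsApex H T m := by
  have apex {m a b : V} (hab : a ≠ b) (ha : s(m, a) ∈ T) (hb : s(m, b) ∈ T) (hna : ¬H.Adj m a)
      (hnb : ¬H.Adj m b) : IsApex H T m :=
    ⟨⟨a, ha⟩, fun x hx => by rcases hT.eq_or_eq_of_mem hab ha hb hx with rfl | rfl <;> assumption⟩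
  obtain ⟨a, b, c, hab, hac, hbc, -, -, -, rfl⟩ := hT
  have hle := card_le_one.mp h
  simp only [mem_inter, mem_insert, mem_singleton, mem_edgeFinset] at hle
  have hne : s(a, b) ≠ s(b, c) ∧ s(a, b) ≠ s(a, c) ∧ s(b, c) ≠ s(a, c) := by
    simp only [ne_eq, Sym2.eq_iff]
    grind
  have hab_bc : ¬(H.Adj a b ∧ H.Adj b c) := fun h =>
    hne.1 (hle _ ⟨.inl rfl, h.1⟩ _ ⟨.inr (.inl rfl), h.2⟩)
  have hab_ac : ¬(H.Adj a b ∧ H.Adj a c) := fun h =>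
    hne.2.1 (hle _ ⟨.inl rfl, h.1⟩ _ ⟨.inr (.inr rfl), h.2⟩)
  have hbc_ac : ¬(H.Adj b c ∧ H.Adj a c) := fun h =>
    hne.2.2 (hle _ ⟨.inr (.inl rfl), h.1⟩ _ ⟨.inr (.inr rfl), h.2⟩)
  by_cases h1 : H.Adj a b
  · exact ⟨c, apex hab (by simp [Sym2.eq_swap]) (by simp [Sym2.eq_swap])
      (fun h => hab_ac ⟨h1, h.symm⟩) (fun h => hab_bc ⟨h1, h.symm⟩)⟩
  by_cases h2 : H.Adj a c
  · exact ⟨b, apex hac (by simp [Sym2.eq_swap]) (by simp) (fun h => h1 h.symm)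
      (fun h => hbc_ac ⟨h, h2⟩)⟩
  · exact ⟨a, apex hbc (by simp) (by simp) h1 h2⟩

end IsTriangleEdgeSet

namespace IsTrianglePartition
variable {V : Type*} [Fintype V] [DecidableEq V] {G H : SimpleGraph V} [DecidableRel G.Adj]
  [DecidableRel H.Adj] {𝒯 : Finset (Finset (Sym2 V))} {T T' : Finset (Sym2 V)} {e : Sym2 V}
  {m w x y : V}

lemma adj_of_mem (h𝒯 : IsTrianglePartition G 𝒯) (hT : T ∈ 𝒯) (h : s(x, y) ∈ T) : G.Adj x y := by
  obtain ⟨a, b, c, -, -, -, hab, hbc, hac, rfl⟩ := h𝒯.1 T hT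
  simp only [mem_insert, mem_singleton, Sym2.eq_iff] at h
  rcases h with (⟨rfl, rfl⟩ | ⟨rfl, rfl⟩) | (⟨rfl, rfl⟩ | ⟨rfl, rfl⟩) | (⟨rfl, rfl⟩ | ⟨rfl, rfl⟩)
  exacts [hab, hab.symm, hbc, hbc.symm, hac, hac.symm]

lemma eq_of_mem (h𝒯 : IsTrianglePartition G 𝒯) (hT : T ∈ 𝒯) (hT' : T' ∈ 𝒯) (he : e ∈ T)
    (he' : e ∈ T') : T = T' := by
  induction e with | h x y => ?_
  exact (h𝒯.2 _ (mem_edgeFinset.mpr (h𝒯.adj_of_mem hT he))).unique ⟨hT, he⟩ ⟨hT', he'⟩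

lemma card_eq_sum_card_inter (h𝒯 : IsTrianglePartition G 𝒯) {E : Finset (Sym2 V)}
    (hE : E ⊆ G.edgeFinset) : #E = ∑ T ∈ 𝒯, #(T ∩ E) := by
  rw [← card_biUnion]
  · congr 1
    ext e
    simp only [mem_biUnion, mem_inter]
    refine ⟨fun he => ?_, fun ⟨_, _, _, he⟩ => he⟩
    obtain ⟨T, ⟨hT, heT⟩, -⟩ := h𝒯.2 e (hE he)
    exact ⟨T, hT, heT, he⟩
  · intro T hT T' hT' hne
    simp only [Function.onFun, Finset.disjoint_left, mem_inter]
    exact fun e he he' => hne (h𝒯.eq_of_mem hT hT' he.1 he'.1)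

section Regular
variable (h𝒯 : IsTrianglePartition G 𝒯) (hG : ∀ v, G.degree v = 4) (hHG : H ≤ G)
  (hH : ∀ v, H.degree v = 2)
include h𝒯 hG hHG hH

lemma adj_or_mem_of_isApex (hT : T ∈ 𝒯) (hm : IsApex H T m) (hw : G.Adj m w) :
    H.Adj m w ∨ s(m, w) ∈ T := by
  obtain ⟨⟨a, ha⟩, hnadj⟩ := hm
  obtain ⟨b, hba, hb⟩ := (h𝒯.1 T hT).exists_ne_mem ha
  have hsub : {a, b} ∪ H.neighborFinset m ⊆ G.neighborFinset m := by
    refine union_subset ?_ fun x hx => ?_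
    · simp [insert_subset_iff, h𝒯.adj_of_mem hT ha, h𝒯.adj_of_mem hT hb]
    · simpa using hHG ((mem_neighborFinset H m x).mp hx)
  have hdisj : Disjoint {a, b} (H.neighborFinset m) := by simp [hnadj a ha, hnadj b hb]
  have hGm : G.neighborFinset m = {a, b} ∪ H.neighborFinset m := by
    refine (eq_of_subset_of_card_le hsub ?_).symm
    rw [card_union_of_disjoint hdisj, card_pair hba.symm, card_neighborFinset_eq_degree,
      card_neighborFinset_eq_degree, hG, hH]
  have hw' : w ∈ G.neighborFinset m := (mem_neighborFinset G m w).mpr hw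
  simp only [hGm, mem_union, mem_insert, mem_singleton, mem_neighborFinset] at hw'
  rcases hw' with (rfl | rfl) | hw'
  exacts [Or.inr ha, Or.inr hb, Or.inl hw']

lemma exists_card_inter_eq_two_of_isApex (h3 : H.CliqueFree 3) (hT' : T' ∈ 𝒯)
    (hm : IsApex H T' m) :
    ∃ T ∈ 𝒯, #(T ∩ H.edgeFinset) = 2 ∧ ∀ w, H.Adj m w → s(m, w) ∈ T := by
  obtain ⟨x, y, hxy, hN⟩ := card_eq_two.mp (hH m)
  have hNm : ∀ w, H.Adj m w ↔ w = x ∨ w = y := fun w => by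
    rw [← mem_neighborFinset, hN, mem_insert, mem_singleton]
  obtain ⟨T, ⟨hT, hxT⟩, -⟩ := h𝒯.2 s(m, x) (mem_edgeFinset.mpr (hHG ((hNm x).mpr (.inl rfl))))
  obtain ⟨w, hwx, hwT⟩ := (h𝒯.1 T hT).exists_ne_mem hxT
  have hyT : s(m, y) ∈ T := by
    rcases h𝒯.adj_or_mem_of_isApex hG hHG hH hT' hm (h𝒯.adj_of_mem hT hwT) with hw | hw
    · obtain rfl : w = y := ((hNm w).mp hw).resolve_left hwx
      exact hwT
    · rw [h𝒯.eq_of_mem hT hT' hwT hw] at hxT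
      exact absurd ((hNm x).mpr (.inl rfl)) (hm.2 x hxT)
  refine ⟨T, hT, le_antisymm ((h𝒯.1 T hT).card_inter_edgeFinset_le_two h3) ?_, fun w hw => ?_⟩
  · rw [← card_pair (fun h => hxy (Sym2.congr_right.mp h))]
    refine card_le_card (insert_subset_iff.mpr ⟨?_, singleton_subset_iff.mpr ?_⟩)
    · exact mem_inter.mpr ⟨hxT, by simpa using (hNm x).mpr (.inl rfl)⟩
    · exact mem_inter.mpr ⟨hyT, by simpa using (hNm y).mpr (.inr rfl)⟩
  · rcases (hNm w).mp hw with rfl | rfl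
    exacts [hxT, hyT]

lemma card_filter_card_inter_eq_one_le (h3 : H.CliqueFree 3) :
    #{T ∈ 𝒯 | #(T ∩ H.edgeFinset) = 1} ≤ #{T ∈ 𝒯 | #(T ∩ H.edgeFinset) = 2} := by
  refine card_le_card_of_forall_subsingleton
    (fun T' T => ∃ m, IsApex H T' m ∧ ∀ w, H.Adj m w → s(m, w) ∈ T) (fun T' hT' => ?_) ?_
  · obtain ⟨hT', h1⟩ := mem_filter.mp hT'
    obtain ⟨m, hm⟩ := (h𝒯.1 T' hT').exists_isApex h1.le
    obtain ⟨T, hT, h2, hmT⟩ := h𝒯.exists_card_inter_eq_two_of_isApex hG hHG hH h3 hT' hm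
    exact ⟨T, mem_filter.mpr ⟨hT, h2⟩, m, hm, hmT⟩
  · rintro T hT T' ⟨hT', m, hm', hmT⟩ T'' ⟨hT'', m'', hm'', hm''T⟩
    rw [mem_filter] at hT hT' hT''
    obtain rfl := eq_of_forall_adj_mem hH hT.2 hmT hm''T
    obtain ⟨⟨a, ha⟩, hna⟩ := hm''
    have hma := h𝒯.adj_or_mem_of_isApex hG hHG hH hT'.1 hm' (h𝒯.adj_of_mem hT''.1 ha)
    exact h𝒯.eq_of_mem hT'.1 hT''.1 (hma.resolve_left (hna a ha)) ha

theorem card_edgeFinset_le_three_mul (h3 : H.CliqueFree 3) :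
    #H.edgeFinset ≤ 3 * #{T ∈ 𝒯 | #(T ∩ H.edgeFinset) = 2} := by
  have hle := h𝒯.card_filter_card_inter_eq_one_le hG hHG hH h3
  calc #H.edgeFinset = ∑ T ∈ 𝒯, #(T ∩ H.edgeFinset) :=
        h𝒯.card_eq_sum_card_inter (edgeFinset_mono hHG)
    _ = #{T ∈ 𝒯 | #(T ∩ H.edgeFinset) = 1} + 2 * #{T ∈ 𝒯 | #(T ∩ H.edgeFinset) = 2} :=
        sum_eq_card_filter_eq_one_add_two_mul _ _ fun T hT =>
          (h𝒯.1 T hT).card_inter_edgeFinset_le_two h3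
    _ ≤ 3 * #{T ∈ 𝒯 | #(T ∩ H.edgeFinset) = 2} := by omega

end Regular

end IsTrianglePartition

/-- If `G` is a `4`-regular graph on `n ≥ 4` vertices whose edges are partitioned into the
family `𝒯` of triangles and `C` is a Hamilton cycle of `G`, and `τ₂` denotes the number
of triangles of `𝒯` containing exactly two edges of `C`, then `3 * τ₂ ≥ n`. -/
theorem three_tau_two_ge_n {V : Type*} [Fintype V] [DecidableEq V]
    (G : SimpleGraph V) [DecidableRel G.Adj]
    (hn : 4 ≤ Fintype.card V)
    (hreg : ∀ v : V, G.degree v = 4)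
    (𝒯 : Finset (Finset (Sym2 V))) (h𝒯 : IsTrianglePartition G 𝒯)
    (u : V) (C : G.Walk u u) (hC : C.IsHamiltonianCycle)
    (τ₂ : ℕ)
    (hτ₂ : τ₂ = (𝒯.filter (fun T => (T ∩ C.edges.toFinset).card = 2)).card) :
    Fintype.card V ≤ 3 * τ₂ := by
  classical
  have hH : ∀ v, C.toSubgraph.spanningCoe.degree v = 2 := fun v =>
    hC.degree_spanningCoe_toSubgraph v
  have hbound := h𝒯.card_edgeFinset_le_three_mul hreg (Subgraph.spanningCoe_le _) hH
    (hC.connected_spanningCoe_toSubgraph.cliqueFree_three hH hn)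
  rw [Walk.edgeFinset_spanningCoe_toSubgraph] at hbound
  rwa [hτ₂, ← hC.card_edges_toFinset]
end

section
/- Let G be a 4-regular simple graph on n ≥ 4 vertices whose edge set is partitioned into a family 𝒯 of triangles (3-cycles), and suppose G has a Hamilton cycle C. Then for every integer l with 3·l ≥ 2·n and l ≤ n, the graph G contains a cycle of length l. -/
open Finset SimpleGraph

section FinArith

variable {n : ℕ}

theorem Fin.val_sub_eq_ite (a b : Fin n) :
    ((a - b : Fin n) : ℕ) = if (b : ℕ) ≤ a then (a : ℕ) - b else n + a - b := by
  split_ifs with h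
  · exact Fin.coe_sub_iff_le.2 h
  · exact Fin.coe_sub_iff_lt.2 (not_le.1 h)

variable [NeZero n]

theorem Fin.val_one_of_two_le (hn : 2 ≤ n) : ((1 : Fin n) : ℕ) = 1 := by
  rw [Fin.val_one', Nat.mod_eq_of_lt hn]

open Fin.CommRing

theorem Fin.natCast_ne_zero_of_lt {k : ℕ} (h0 : 0 < k) (hk : k < n) : (k : Fin n) ≠ 0 :=
  fun h ↦ (Nat.le_of_dvd h0 (Fin.natCast_eq_zero.1 h)).not_gt hk

theorem Fin.add_one_ne_self (hn : 2 ≤ n) (i : Fin n) : i + 1 ≠ i := by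
  intro h
  refine Fin.natCast_ne_zero_of_lt (n := n) (k := 1) (by omega) (by omega) ?_
  push_cast
  linear_combination h

theorem Fin.sub_one_ne_add_one (hn : 3 ≤ n) (i : Fin n) : i - 1 ≠ i + 1 := by
  intro h
  refine Fin.natCast_ne_zero_of_lt (n := n) (k := 2) (by omega) (by omega) ?_
  push_cast
  linear_combination -h

theorem Fin.sub_one_ne_add_one_add_one (hn : 4 ≤ n) (i : Fin n) : i - 1 ≠ i + 1 + 1 := by
  intro h
  refine Fin.natCast_ne_zero_of_lt (n := n) (k := 3) (by omega) (by omega) ?_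
  push_cast
  linear_combination -h

end FinArith

namespace Finset

variable {n : ℕ} (K : Finset (Fin n)) [NeZero #K]

/-- `((x - a : Fin n) : ℕ)` is the distance from `a` forward to `x` around `Fin n`. -/
theorem val_orderEmbOfFin_add_one_sub_le (j : Fin #K) {x : Fin n} (hx : x ∈ K)
    (hxj : x ≠ K.orderEmbOfFin rfl j) :
    ((K.orderEmbOfFin rfl (j + 1) - K.orderEmbOfFin rfl j : Fin n) : ℕ) ≤
      ((x - K.orderEmbOfFin rfl j : Fin n) : ℕ) := by
  set g := K.orderEmbOfFin rfl
  obtain ⟨i, rfl⟩ : x ∈ Set.range g := by rwa [K.range_orderEmbOfFin rfl]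
  have hij : i ≠ j := fun h ↦ hxj (h ▸ rfl)
  have hlt {a b : Fin #K} : (g a : ℕ) < g b ↔ a < b := by
    rw [← Fin.lt_def, g.lt_iff_lt]
  have hle {a b : Fin #K} : (g a : ℕ) ≤ g b ↔ a ≤ b := by
    rw [← Fin.le_def, g.le_iff_le]
  have hnext_lt : (g (j + 1) : ℕ) < n := (g (j + 1)).isLt
  rw [Fin.val_sub_eq_ite, Fin.val_sub_eq_ite]
  rcases Nat.lt_or_ge ((j : ℕ) + 1) #K with hj | hj
  · have hsucc : ((j + 1 : Fin #K) : ℕ) = j + 1 := Fin.val_add_one_of_lt' hj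
    have hjs : (g j : ℕ) < g (j + 1) := hlt.2 (Fin.lt_def.2 (by omega))
    rcases lt_or_gt_of_ne hij with hi | hi
    · have : (g i : ℕ) < g j := hlt.2 hi
      split_ifs <;> omega
    · have : (g (j + 1) : ℕ) ≤ g i := hle.2 (Fin.le_def.2 (by rw [hsucc]; exact hi))
      split_ifs <;> omega
  · have hwrap : j + 1 = 0 := by
      rw [Fin.ext_iff, Fin.val_add, Fin.val_one', Nat.add_mod_mod,
        show (j : ℕ) + 1 = #K by omega, Nat.mod_self, Fin.val_zero]
    have h0 : (g (j + 1) : ℕ) ≤ g i := hle.2 (hwrap ▸ Fin.zero_le i)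
    have hi : (g i : ℕ) < g j := by
      have := Fin.val_ne_of_ne hij
      exact hlt.2 (Fin.lt_def.2 (by omega))
    split_ifs <;> omega

theorem orderEmbOfFin_add_one_eq_or [NeZero n] (hn : 3 ≤ n) (hK : ∀ x ∉ K, x + 1 ∈ K)
    (hK2 : 2 ≤ #K) (j : Fin #K) :
    K.orderEmbOfFin rfl (j + 1) = K.orderEmbOfFin rfl j + 1 ∨
      K.orderEmbOfFin rfl j + 1 ∉ K ∧
        K.orderEmbOfFin rfl (j + 1) = K.orderEmbOfFin rfl j + 1 + 1 := by
  set g := K.orderEmbOfFin rfl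
  set a := g j
  set d : Fin n → ℕ := fun x ↦ ((x - a : Fin n) : ℕ) with hd
  have hd_inj {x y : Fin n} (h : d x = d y) : x = y := sub_left_inj.1 (Fin.ext h)
  have hd_self : d a = 0 := by simp [hd]
  have hd_one : d (a + 1) = 1 := by
    change ((a + 1 - a : Fin n) : ℕ) = 1
    rw [add_sub_cancel_left, Fin.val_one_of_two_le (by omega)]
  have hd_two : d (a + 1 + 1) = 2 := by
    change ((a + 1 + 1 - a : Fin n) : ℕ) = 2
    rw [add_assoc, add_sub_cancel_left, Fin.val_add, Fin.val_one_of_two_le (by omega)]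
    exact Nat.mod_eq_of_lt hn
  have hd_next : d (g (j + 1)) ≠ 0 := fun h ↦
    g.injective.ne (Fin.add_one_ne_self hK2 j) (hd_inj (h.trans hd_self.symm))
  have hle {x : Fin n} (hx : x ∈ K) (hxa : d x ≠ 0) : d (g (j + 1)) ≤ d x :=
    K.val_orderEmbOfFin_add_one_sub_le j hx fun h ↦ hxa (h ▸ hd_self)
  by_cases ha1 : a + 1 ∈ K
  · have := hle ha1 (by omega)
    exact .inl (hd_inj (by omega))
  · have h2 := hle (hK _ ha1) (by omega)
    have h1 : d (g (j + 1)) ≠ 1 := fun h ↦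
      ha1 (hd_inj (h.trans hd_one.symm) ▸ K.orderEmbOfFin_mem rfl _)
    exact .inr ⟨ha1, hd_inj (by omega)⟩

end Finset

namespace SimpleGraph

variable {V : Type*} {G : SimpleGraph V}

theorem cycleGraph_isContained_iff_exists_injective {n : ℕ} [NeZero n] (hn : 2 ≤ n) :
    cycleGraph n ⊑ G ↔ ∃ f : Fin n → V, Function.Injective f ∧ ∀ i, G.Adj (f i) (f (i + 1)) := by
  have hsub_eq_one {a b : Fin n} : ((a - b : Fin n) : ℕ) = 1 ↔ a = b + 1 := by
    rw [← Fin.val_one_of_two_le hn, Fin.val_inj, sub_eq_iff_eq_add']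
  constructor
  · rintro ⟨c⟩
    refine ⟨c, c.injective, fun i ↦ c.toHom.map_adj ?_⟩
    exact cycleGraph_adj'.2 (.inr (hsub_eq_one.2 rfl))
  · rintro ⟨f, hf, hadj⟩
    refine ⟨⟨f, fun {a b} hab ↦ ?_⟩, hf⟩
    rcases cycleGraph_adj'.1 hab with h | h
    · rw [hsub_eq_one.1 h]
      exact (hadj b).symm
    · rw [hsub_eq_one.1 h]
      exact hadj a

theorem cycleGraph_isContained_of_skip {n : ℕ} [NeZero n] {e : Fin n → V}
    (he : Function.Injective e) (hadj : ∀ i, G.Adj (e i) (e (i + 1))) {S : Finset (Fin n)}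
    (hS : ∀ i ∈ S, i + 1 ∉ S) (hchord : ∀ i ∈ S, G.Adj (e (i - 1)) (e (i + 1)))
    (hcard : 3 ≤ n - #S) : cycleGraph (n - #S) ⊑ G := by
  have hK : #Sᶜ = n - #S := by rw [card_compl, Fintype.card_fin]
  have hgap : ∀ x ∉ Sᶜ, x + 1 ∈ Sᶜ := by
    simp only [mem_compl, not_not]
    exact hS
  have : NeZero #Sᶜ := ⟨by omega⟩
  rw [← hK, cycleGraph_isContained_iff_exists_injective (by omega)]
  refine ⟨e ∘ Sᶜ.orderEmbOfFin rfl, he.comp (Sᶜ.orderEmbOfFin rfl).injective, fun j ↦ ?_⟩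
  rcases Sᶜ.orderEmbOfFin_add_one_eq_or (by omega) hgap (by omega) j with h | ⟨hj, h⟩
  · simpa [h] using hadj _
  · have := hchord _ (by simpa using hj)
    rw [add_sub_cancel_right] at this
    simpa [h] using this

theorem IsRegularOfDegree.two_mul_card_edgeFinset [Fintype V] [DecidableRel G.Adj] {d : ℕ}
    (hG : G.IsRegularOfDegree d) : 2 * #G.edgeFinset = d * Fintype.card V := by
  rw [← sum_degrees_eq_twice_card_edges, sum_congr rfl fun v _ ↦ hG.degree_eq v, sum_const,
    card_univ, smul_eq_mul, mul_comm]

end SimpleGraph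

namespace IsTriangleEdgeSet

variable {V : Type*} [DecidableEq V] {G : SimpleGraph V} {T : Finset (Sym2 V)}

theorem card_eq_three (hT : IsTriangleEdgeSet G T) : #T = 3 := by
  obtain ⟨a, b, c, hab, hac, hbc, -, -, -, rfl⟩ := hT
  rw [card_eq_three]
  refine ⟨_, _, _, ?_, ?_, ?_, rfl⟩ <;> grind [Sym2.eq_iff]

theorem mem_edgeSet (hT : IsTriangleEdgeSet G T) {e : Sym2 V} (he : e ∈ T) : e ∈ G.edgeSet := by
  obtain ⟨a, b, c, -, -, -, hab, hbc, hac, rfl⟩ := hT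
  simp only [mem_insert, mem_singleton] at he
  rcases he with rfl | rfl | rfl <;> assumption

theorem eq_or_eq_or_eq_or_eq (hT : IsTriangleEdgeSet G T) {x y z w : V} (hxy : s(x, y) ∈ T)
    (hzw : s(z, w) ∈ T) : x = z ∨ x = w ∨ y = z ∨ y = w := by
  obtain ⟨a, b, c, -, -, -, -, -, -, rfl⟩ := hT
  simp only [mem_insert, mem_singleton, Sym2.eq_iff] at hxy hzw
  grind

theorem adj_of_mem (hT : IsTriangleEdgeSet G T) {x y z : V} (hxy : s(x, y) ∈ T)
    (hyz : s(y, z) ∈ T) (hxz : x ≠ z) : G.Adj x z := by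
  obtain ⟨a, b, c, -, -, -, hab, hbc, hac, rfl⟩ := hT
  simp only [mem_insert, mem_singleton, Sym2.eq_iff] at hxy hyz
  grind [SimpleGraph.Adj.symm]

theorem eq_or_eq_add_one_of_mem (hT : IsTriangleEdgeSet G T) {n : ℕ} [NeZero n] {e : Fin n → V}
    (he : Function.Injective e) {i j : Fin n} (hi : s(e i, e (i + 1)) ∈ T)
    (hj : s(e j, e (j + 1)) ∈ T) : i = j ∨ j = i + 1 ∨ i = j + 1 := by
  rcases hT.eq_or_eq_or_eq_or_eq hi hj with h | h | h | h <;> have h := he h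
  · exact .inl h
  · exact .inr (.inr h)
  · exact .inr (.inl h.symm)
  · exact .inl (add_right_cancel h)

end IsTriangleEdgeSet

namespace IsTrianglePartition

variable {V : Type*} [Fintype V] [DecidableEq V] {G : SimpleGraph V} [DecidableRel G.Adj]
  {𝒯 : Finset (Finset (Sym2 V))}

theorem existsUnique_of_adj (h𝒯 : IsTrianglePartition G 𝒯) {x y : V} (h : G.Adj x y) :
    ∃! T, T ∈ 𝒯 ∧ s(x, y) ∈ T :=
  h𝒯.2 _ (mem_edgeFinset.2 h)

theorem three_mul_card (h𝒯 : IsTrianglePartition G 𝒯) : 3 * #𝒯 = #G.edgeFinset := by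
  have hunion : 𝒯.biUnion id = G.edgeFinset := by
    ext e
    refine ⟨fun he ↦ ?_, fun he ↦ ?_⟩
    · obtain ⟨T, hT, heT⟩ := mem_biUnion.1 he
      exact mem_edgeFinset.2 ((h𝒯.1 T hT).mem_edgeSet heT)
    · obtain ⟨T, ⟨hT, heT⟩, -⟩ := h𝒯.2 e he
      exact mem_biUnion.2 ⟨T, hT, heT⟩
  have hdisj : (𝒯 : Set (Finset (Sym2 V))).PairwiseDisjoint id := by
    intro T hT T' hT' hne
    refine disjoint_left.2 fun e heT heT' ↦ hne ?_
    have he := mem_edgeFinset.2 ((h𝒯.1 T hT).mem_edgeSet heT)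
    exact (h𝒯.2 e he).unique ⟨hT, heT⟩ ⟨hT', heT'⟩
  rw [← hunion, card_biUnion hdisj, sum_const_nat fun T hT ↦ (h𝒯.1 T hT).card_eq_three (T := id T),
    mul_comm]

end IsTrianglePartition

section TriangleCorners

variable {V : Type*} {n : ℕ} [NeZero n] {𝒯 : Finset (Finset (Sym2 V))} {e : Fin n → V}

/-- The indices `i` at which the cyclic sequence `e` runs along two sides of a triangle of `𝒯`;
the third side is then a chord skipping `e i`. -/
noncomputable def triangleCorners (𝒯 : Finset (Finset (Sym2 V))) (e : Fin n → V) :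
    Finset (Fin n) :=
  open Classical in {i | ∃ T ∈ 𝒯, s(e (i - 1), e i) ∈ T ∧ s(e i, e (i + 1)) ∈ T}

theorem mem_triangleCorners {i : Fin n} :
    i ∈ triangleCorners 𝒯 e ↔ ∃ T ∈ 𝒯, s(e (i - 1), e i) ∈ T ∧ s(e i, e (i + 1)) ∈ T := by
  simp [triangleCorners]

variable [Fintype V] [DecidableEq V] {G : SimpleGraph V} [DecidableRel G.Adj]

theorem card_le_card_add_card_triangleCorners (h𝒯 : IsTrianglePartition G 𝒯)
    (he : Function.Injective e) (hadj : ∀ i, G.Adj (e i) (e (i + 1))) :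
    n ≤ #𝒯 + #(triangleCorners 𝒯 e) := by
  choose t ht hmem using fun i ↦ (h𝒯.existsUnique_of_adj (hadj i)).exists
  have hinj : Set.InjOn t ↑(triangleCorners 𝒯 e)ᶜ := by
    intro i hi j hj hij
    simp only [coe_compl, Set.mem_compl_iff, mem_coe, mem_triangleCorners, not_exists,
      not_and] at hi hj
    have hj' : s(e j, e (j + 1)) ∈ t i := hij ▸ hmem j
    rcases (h𝒯.1 _ (ht i)).eq_or_eq_add_one_of_mem he (hmem i) hj' with h | rfl | rfl
    · exact h
    · exact absurd hj' (hj _ (ht i) (by rw [add_sub_cancel_right]; exact hmem i))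
    · exact absurd (hmem _) (hi _ (ht _) (by rwa [add_sub_cancel_right]))
  have := card_le_card_of_injOn t (fun i _ ↦ ht i) hinj
  rw [card_compl, Fintype.card_fin] at this
  omega

theorem adj_of_mem_triangleCorners (h𝒯 : IsTrianglePartition G 𝒯) (he : Function.Injective e)
    (hn : 3 ≤ n) {i : Fin n} (hi : i ∈ triangleCorners 𝒯 e) : G.Adj (e (i - 1)) (e (i + 1)) := by
  obtain ⟨T, hT, h₁, h₂⟩ := mem_triangleCorners.1 hi
  exact (h𝒯.1 T hT).adj_of_mem h₁ h₂ (he.ne (Fin.sub_one_ne_add_one hn i))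

theorem add_one_notMem_triangleCorners (h𝒯 : IsTrianglePartition G 𝒯)
    (he : Function.Injective e) (hadj : ∀ i, G.Adj (e i) (e (i + 1))) (hn : 4 ≤ n) {i : Fin n}
    (hi : i ∈ triangleCorners 𝒯 e) : i + 1 ∉ triangleCorners 𝒯 e := by
  intro hi'
  obtain ⟨T, hT, hprev, hcur⟩ := mem_triangleCorners.1 hi
  obtain ⟨T', hT', hcur', hnext⟩ := mem_triangleCorners.1 hi'
  rw [add_sub_cancel_right] at hcur'
  obtain rfl : T = T' := (h𝒯.existsUnique_of_adj (hadj i)).unique ⟨hT, hcur⟩ ⟨hT', hcur'⟩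
  replace hprev : s(e (i - 1), e (i - 1 + 1)) ∈ T := by rwa [sub_add_cancel]
  rcases (h𝒯.1 T hT).eq_or_eq_add_one_of_mem he hprev hnext with h | h | h
  · exact Fin.sub_one_ne_add_one (by omega) i h
  · exact Fin.add_one_ne_self (by omega) i (by rwa [sub_add_cancel] at h)
  · exact Fin.sub_one_ne_add_one_add_one hn i h

end TriangleCorners

/-- If `G` is a `4`-regular graph on `n ≥ 4` vertices whose edges are partitioned into
triangles and `G` has a Hamilton cycle, then for every `l` with `3 * l ≥ 2 * n` and
`l ≤ n`, the graph `G` contains a cycle of length `l`. -/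
theorem cycles_of_large_lengths {V : Type*} [Fintype V] [DecidableEq V]
    (G : SimpleGraph V) [DecidableRel G.Adj]
    (hn : 4 ≤ Fintype.card V)
    (hreg : ∀ v : V, G.degree v = 4)
    (𝒯 : Finset (Finset (Sym2 V))) (h𝒯 : IsTrianglePartition G 𝒯)
    (u : V) (C : G.Walk u u) (hC : C.IsHamiltonianCycle) :
    ∀ l : ℕ, 2 * Fintype.card V ≤ 3 * l → l ≤ Fintype.card V →
      ∃ (w : V) (c : G.Walk w w), c.IsCycle ∧ c.length = l := by
  intro l hl hln
  have : NeZero (Fintype.card V) := ⟨by omega⟩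
  obtain ⟨e, he, hadj⟩ := (cycleGraph_isContained_iff_exists_injective (by omega)).1
    ((cycleGraph_isContained_iff (by omega)).2 ⟨u, C, hC.isCycle, hC.length_eq⟩)
  have hcorners := card_le_card_add_card_triangleCorners h𝒯 he hadj
  have htriangles := h𝒯.three_mul_card
  have hedges := IsRegularOfDegree.two_mul_card_edgeFinset hreg
  obtain ⟨S, hS, hScard⟩ :=
    exists_subset_card_eq (show Fintype.card V - l ≤ #(triangleCorners 𝒯 e) by omega)
  have hcycle := cycleGraph_isContained_of_skip he hadj
    (fun i hi ↦ add_one_notMem_triangleCorners h𝒯 he hadj hn (hS hi) ∘ (hS ·))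
    (fun i hi ↦ adj_of_mem_triangleCorners h𝒯 he (by omega) (hS hi)) (by omega)
  rw [hScard, Nat.sub_sub_self hln] at hcycle
  exact (cycleGraph_isContained_iff (by omega)).1 hcycle
end
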